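/- arXiv:2008.07554 — 5 statements merged into one kernel-verified Lean document; each statement's English description precedes it below -/
import Mathlib

section
/- Let 1 < q < p, and let F(z₁,z₂) = q z₁^(1-1/q) z₂^(1/p). If t ∈ (0,1), z ∈ [0,∞) × [0,∞), z̄ ∈ (0,∞) × (0,∞), and z ≠ z̄, then F((1-t)z + t z̄) > (1-t)F(z) + t F(z̄). -/
open Set

/-
With `a = 1 - 1/q` and `b = 1/p` we have `a, b > 0` and `a + b < 1`, and `F = q z₁^a z₂^b`.
Let `u = (1 - t) z + t z̄`, an interior point. Weighted AM-GM for `z₁/u₁`, `z₂/u₂`, `1` with weights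
`a`, `b`, `1 - a - b` puts `z₁^a z₂^b` strictly below the tangent plane of `x^a y^b` at `u` unless
`z = u`, also when `z` is on the boundary of the quadrant. Averaging the tangent-plane bounds at
`z` and `z̄` with weights `1 - t`, `t` gives exactly `u₁^a u₂^b`.
-/

theorem Real.geom_mean_lt_arith_mean3_weighted_of_pos {w₁ w₂ w₃ p₁ p₂ p₃ : ℝ} (hw₁ : 0 < w₁)
    (hw₂ : 0 < w₂) (hw₃ : 0 < w₃) (hp₁ : 0 ≤ p₁) (hp₂ : 0 ≤ p₂) (hp₃ : 0 ≤ p₃)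
    (hw : w₁ + w₂ + w₃ = 1) (hne : p₁ ≠ p₃ ∨ p₂ ≠ p₃) :
    p₁ ^ w₁ * p₂ ^ w₂ * p₃ ^ w₃ < w₁ * p₁ + w₂ * p₂ + w₃ * p₃ := by
  have := Real.geom_mean_lt_arith_mean_weighted_iff_of_pos Finset.univ ![w₁, w₂, w₃]
    ![p₁, p₂, p₃]
  simp [Fin.sum_univ_three, Fin.prod_univ_three, Fin.forall_fin_succ, Fin.exists_fin_succ] at this
  grind

noncomputable def cobbDouglas (a b : ℝ) (z : ℝ × ℝ) : ℝ := z.1 ^ a * z.2 ^ b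

/-- The right-hand side is the tangent plane of `cobbDouglas a b` at `u`. -/
theorem cobbDouglas_lt_tangent {a b : ℝ} (ha : 0 < a) (hb : 0 < b) (hab : a + b < 1)
    {z u : ℝ × ℝ} (hz : z ∈ Ici (0:ℝ) ×ˢ Ici (0:ℝ)) (hu : u ∈ Ioi (0:ℝ) ×ˢ Ioi (0:ℝ))
    (hne : z ≠ u) :
    cobbDouglas a b z <
      cobbDouglas a b u * (a * (z.1 / u.1) + b * (z.2 / u.2) + (1 - (a + b))) := by
  obtain ⟨hz₁, hz₂⟩ : 0 ≤ z.1 ∧ 0 ≤ z.2 := hz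
  obtain ⟨hu₁, hu₂⟩ : 0 < u.1 ∧ 0 < u.2 := hu
  have hne' : z.1 / u.1 ≠ 1 ∨ z.2 / u.2 ≠ 1 := by
    rw [ne_eq, ne_eq, div_eq_one_iff_eq hu₁.ne', div_eq_one_iff_eq hu₂.ne', ← not_and_or]
    exact fun h ↦ hne (Prod.ext h.1 h.2)
  have amgm := Real.geom_mean_lt_arith_mean3_weighted_of_pos ha hb (w₃ := 1 - (a + b))
    (by linarith) (div_nonneg hz₁ hu₁.le) (div_nonneg hz₂ hu₂.le) zero_le_one (by ring) hne'
  rw [Real.one_rpow, mul_one, mul_one, Real.div_rpow hz₁ hu₁.le, Real.div_rpow hz₂ hu₂.le]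
    at amgm
  have hG : 0 < cobbDouglas a b u := by unfold cobbDouglas; positivity
  calc cobbDouglas a b z
      = cobbDouglas a b u * (z.1 ^ a / u.1 ^ a * (z.2 ^ b / u.2 ^ b)) := by
        unfold cobbDouglas; field_simp
    _ < cobbDouglas a b u * (a * (z.1 / u.1) + b * (z.2 / u.2) + (1 - (a + b))) :=
        mul_lt_mul_of_pos_left amgm hG

theorem cobbDouglas_combo_lt {a b : ℝ} (ha : 0 < a) (hb : 0 < b) (hab : a + b < 1) {t : ℝ}
    (ht : t ∈ Ioo (0:ℝ) 1) {z w : ℝ × ℝ} (hz : z ∈ Ici (0:ℝ) ×ˢ Ici (0:ℝ))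
    (hw : w ∈ Ioi (0:ℝ) ×ˢ Ioi (0:ℝ)) (hne : z ≠ w) :
    (1 - t) * cobbDouglas a b z + t * cobbDouglas a b w <
      cobbDouglas a b ((1 - t) • z + t • w) := by
  obtain ⟨ht₀, ht₁⟩ := ht
  set u := (1 - t) • z + t • w with hu_def
  have hu : u ∈ Ioi (0:ℝ) ×ˢ Ioi (0:ℝ) := by
    obtain ⟨hz₁, hz₂⟩ : 0 ≤ z.1 ∧ 0 ≤ z.2 := hz
    obtain ⟨hw₁, hw₂⟩ : 0 < w.1 ∧ 0 < w.2 := hw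
    constructor <;> simp only [u, mem_Ioi, Prod.fst_add, Prod.snd_add, Prod.smul_fst,
      Prod.smul_snd, smul_eq_mul] <;> nlinarith
  have hzu : z ≠ u := by
    rw [hu_def, ← AffineMap.lineMap_apply_module, ne_comm, ne_eq, AffineMap.lineMap_eq_left_iff]
    exact not_or.2 ⟨hne, ht₀.ne'⟩
  have hwu : w ≠ u := by
    rw [hu_def, ← AffineMap.lineMap_apply_module, ne_comm, ne_eq, AffineMap.lineMap_eq_right_iff]
    exact not_or.2 ⟨hne, ht₁.ne⟩
  have hweights : (1 - t) * (a * (z.1 / u.1) + b * (z.2 / u.2) + (1 - (a + b)))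
      + t * (a * (w.1 / u.1) + b * (w.2 / u.2) + (1 - (a + b))) = 1 := by
    have hu₁ : u.1 ≠ 0 := hu.1.ne'
    have hu₂ : u.2 ≠ 0 := hu.2.ne'
    simp only [u, Prod.fst_add, Prod.snd_add, Prod.smul_fst, Prod.smul_snd, smul_eq_mul]
      at hu₁ hu₂ ⊢
    field_simp
    ring
  have hw' : w ∈ Ici (0:ℝ) ×ˢ Ici (0:ℝ) := prod_mono Ioi_subset_Ici_self Ioi_subset_Ici_self hw
  calc (1 - t) * cobbDouglas a b z + t * cobbDouglas a b w
      < (1 - t) * (cobbDouglas a b u * (a * (z.1 / u.1) + b * (z.2 / u.2) + (1 - (a + b))))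
        + t * (cobbDouglas a b u * (a * (w.1 / u.1) + b * (w.2 / u.2) + (1 - (a + b)))) :=
        add_lt_add
          (mul_lt_mul_of_pos_left (cobbDouglas_lt_tangent ha hb hab hz hu hzu) (sub_pos.2 ht₁))
          (mul_lt_mul_of_pos_left (cobbDouglas_lt_tangent ha hb hab hw' hu hwu) ht₀)
    _ = cobbDouglas a b u := by linear_combination cobbDouglas a b u * hweights

/-- For `1 < q < p` and `F(z₁,z₂) = q·z₁^(1-1/q)·z₂^(1/p)`: if `t ∈ (0,1)`,
`z ∈ [0,∞)²`, `z̄ ∈ (0,∞)²` and `z ≠ z̄`, then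
`F((1-t)z + t z̄) > (1-t)F(z) + t F(z̄)`. -/
theorem stmt_2 (p q : ℝ) (hq : 1 < q) (hqp : q < p)
    (F : ℝ × ℝ → ℝ)
    (hF : ∀ z : ℝ × ℝ, F z = q * z.1 ^ (1 - 1 / q) * z.2 ^ (1 / p))
    (t : ℝ) (ht : t ∈ Ioo (0:ℝ) 1)
    (z : ℝ × ℝ) (hz : z ∈ Ici (0:ℝ) ×ˢ Ici (0:ℝ))
    (zb : ℝ × ℝ) (hzb : zb ∈ Ioi (0:ℝ) ×ˢ Ioi (0:ℝ))
    (hne : z ≠ zb) :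
    (1 - t) * F z + t * F zb < F ((1 - t) • z + t • zb) := by
  have hq₀ : 0 < q := by linarith
  have ha : 0 < 1 - 1 / q := sub_pos.2 ((div_lt_one hq₀).2 hq)
  have hb : 0 < 1 / p := one_div_pos.2 (by linarith)
  have hab : 1 - 1 / q + 1 / p < 1 := by linarith [one_div_lt_one_div_of_lt hq₀ hqp]
  have hF' : ∀ z, F z = q * cobbDouglas (1 - 1 / q) (1 / p) z := fun z ↦ by
    rw [hF, cobbDouglas, mul_assoc]
  rw [hF', hF', hF']
  linarith [mul_lt_mul_of_pos_left (cobbDouglas_combo_lt ha hb hab ht hz hzb hne) hq₀]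
end

section
/- Let 1 < q < p and let u, v, ∇u, ∇v be nonnegative real numbers (pointwise values and gradient magnitudes). For t ∈ [0,1] define γ(t) = ((1-t)u^q + t v^q)^(1/q) with gradient magnitude satisfying the chain-rule formula. Then the pointwise inequality |∇γ(t)|^p ≤ (1-t)|∇u|^p + t|∇v|^p holds in the scalar model: for all a, b, A, B ≥ 0 with (a,A) representing (u(x),|∇u(x)|) and (b,B) representing (v(x),|∇v(x)|), one has (((1-t)a^q + t b^q)^(1/q - 1) · ((1-t) a^(q-1) A + t b^(q-1) B))^p ≤ (1-t) A^p + t B^p, whenever (1-t)a^q + t b^q > 0. -/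
open Set

/-! For weights `θ` summing to `1`, Hölder's inequality with exponents `p' = p / (p - 1)` and `p`
gives `∑ θ a^(q-1) A ≤ (∑ θ a^((q-1)p'))^(1/p') (∑ θ A^p)^(1/p)`. Since `(q - 1) p' ≤ q` exactly
when `q ≤ p`, the power-mean inequality bounds the first factor by `(∑ θ a^q)^((q-1)/q)`, which
cancels the prefactor `(∑ θ a^q)^(1/q - 1)`. The theorem is the case of two weights `1 - t, t`. -/

section WeightedMeans

open Finset Real

variable {ι : Type*} (s : Finset ι) {θ : ι → ℝ}

theorem inner_le_weighted_Lp_mul_Lq_of_nonneg {f g : ι → ℝ} {p q : ℝ} (hpq : p.HolderConjugate q)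
    (hθ : ∀ i ∈ s, 0 ≤ θ i) (hf : ∀ i ∈ s, 0 ≤ f i) (hg : ∀ i ∈ s, 0 ≤ g i) :
    ∑ i ∈ s, θ i * f i * g i ≤
      (∑ i ∈ s, θ i * f i ^ p) ^ (1 / p) * (∑ i ∈ s, θ i * g i ^ q) ^ (1 / q) := by
  have holder := inner_le_Lp_mul_Lq_of_nonneg s hpq
    (f := fun i ↦ θ i ^ (1 / p) * f i) (g := fun i ↦ θ i ^ (1 / q) * g i)
    (fun i hi ↦ by have := hθ i hi; have := hf i hi; positivity)
    (fun i hi ↦ by have := hθ i hi; have := hg i hi; positivity)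
  have hpow {r : ℝ} (hr : 0 < r) {x y : ℝ} (hx : 0 ≤ x) (hy : 0 ≤ y) :
      (x ^ (1 / r) * y) ^ r = x * y ^ r := by
    rw [mul_rpow (by positivity) hy, ← rpow_mul hx, one_div_mul_cancel hr.ne', rpow_one]
  have hsplit (i) (hi : i ∈ s) : θ i = θ i ^ (1 / p) * θ i ^ (1 / q) := by
    rw [← rpow_add' (hθ i hi) (by simp [hpq.inv_add_inv_eq_one]), one_div, one_div,
      hpq.inv_add_inv_eq_one, rpow_one]
  calc ∑ i ∈ s, θ i * f i * g i
      = ∑ i ∈ s, θ i ^ (1 / p) * f i * (θ i ^ (1 / q) * g i) :=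
        sum_congr rfl fun i hi ↦ by nth_rewrite 1 [hsplit i hi]; ring
    _ ≤ _ := holder
    _ = _ := by
        simp only [sum_congr rfl fun i hi ↦ hpow hpq.pos (hθ i hi) (hf i hi),
          sum_congr rfl fun i hi ↦ hpow hpq.symm.pos (hθ i hi) (hg i hi)]

theorem sum_mul_rpow_le_rpow_sum_mul_rpow {a : ι → ℝ} {r q : ℝ} (hr : 0 < r) (hrq : r ≤ q)
    (hθ : ∀ i ∈ s, 0 ≤ θ i) (hθ₁ : ∑ i ∈ s, θ i = 1) (ha : ∀ i ∈ s, 0 ≤ a i) :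
    ∑ i ∈ s, θ i * a i ^ r ≤ (∑ i ∈ s, θ i * a i ^ q) ^ (r / q) := by
  have hmean := arith_mean_le_rpow_mean s θ (fun i ↦ a i ^ r) hθ hθ₁
    (fun i hi ↦ rpow_nonneg (ha i hi) r) ((one_le_div hr).2 hrq)
  refine hmean.trans_eq ?_
  rw [one_div_div]
  congr 1
  exact sum_congr rfl fun i hi ↦ by rw [← rpow_mul (ha i hi), mul_div_cancel₀ _ hr.ne']

variable {a A : ι → ℝ} {p q : ℝ}

theorem sum_mul_rpow_sub_one_mul_le (hq : 1 < q) (hqp : q ≤ p)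
    (hθ : ∀ i ∈ s, 0 ≤ θ i) (hθ₁ : ∑ i ∈ s, θ i = 1)
    (ha : ∀ i ∈ s, 0 ≤ a i) (hA : ∀ i ∈ s, 0 ≤ A i) :
    ∑ i ∈ s, θ i * a i ^ (q - 1) * A i ≤
      (∑ i ∈ s, θ i * a i ^ q) ^ ((q - 1) / q) * (∑ i ∈ s, θ i * A i ^ p) ^ (1 / p) := by
  set r := p.conjExponent
  have hrp : r.HolderConjugate p := (HolderConjugate.conjExponent (hq.trans_le hqp)).symm
  have hr : 0 < r := hrp.pos
  have hexp : (q - 1) * r ≤ q := by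
    rw [show r = p / (p - 1) from rfl, ← mul_div_assoc, div_le_iff₀ (by linarith)]
    nlinarith
  have hholder := inner_le_weighted_Lp_mul_Lq_of_nonneg s hrp hθ
    (fun i hi ↦ rpow_nonneg (ha i hi) (q - 1)) hA
  refine hholder.trans (mul_le_mul_of_nonneg_right ?_ (rpow_nonneg (sum_nonneg fun i hi ↦
    mul_nonneg (hθ i hi) (rpow_nonneg (hA i hi) p)) _))
  calc (∑ i ∈ s, θ i * (a i ^ (q - 1)) ^ r) ^ (1 / r)
      = (∑ i ∈ s, θ i * a i ^ ((q - 1) * r)) ^ (1 / r) := by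
        rw [sum_congr rfl fun i hi ↦ by rw [← rpow_mul (ha i hi)]]
    _ ≤ ((∑ i ∈ s, θ i * a i ^ q) ^ ((q - 1) * r / q)) ^ (1 / r) :=
        rpow_le_rpow (sum_nonneg fun i hi ↦ by have := hθ i hi; have := ha i hi; positivity)
          (sum_mul_rpow_le_rpow_sum_mul_rpow s (mul_pos (by linarith) hr) hexp hθ hθ₁ ha)
          (by positivity)
    _ = (∑ i ∈ s, θ i * a i ^ q) ^ ((q - 1) / q) := by
        rw [← rpow_mul (sum_nonneg fun i hi ↦ by have := hθ i hi; have := ha i hi; positivity)]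
        field_simp

theorem rpow_mul_sum_mul_rpow_sub_one_mul_rpow_le (hq : 1 < q) (hqp : q ≤ p)
    (hθ : ∀ i ∈ s, 0 ≤ θ i) (hθ₁ : ∑ i ∈ s, θ i = 1)
    (ha : ∀ i ∈ s, 0 ≤ a i) (hA : ∀ i ∈ s, 0 ≤ A i) (hw : 0 < ∑ i ∈ s, θ i * a i ^ q) :
    ((∑ i ∈ s, θ i * a i ^ q) ^ (1 / q - 1) * ∑ i ∈ s, θ i * a i ^ (q - 1) * A i) ^ p ≤
      ∑ i ∈ s, θ i * A i ^ p := by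
  set w := ∑ i ∈ s, θ i * a i ^ q
  set R := ∑ i ∈ s, θ i * A i ^ p
  have hR : 0 ≤ R := sum_nonneg fun i hi ↦ by have := hθ i hi; have := hA i hi; positivity
  have hp : 0 < p := by linarith
  calc (w ^ (1 / q - 1) * ∑ i ∈ s, θ i * a i ^ (q - 1) * A i) ^ p
      ≤ (w ^ (1 / q - 1) * (w ^ ((q - 1) / q) * R ^ (1 / p))) ^ p := by
        gcongr
        · exact mul_nonneg (rpow_nonneg hw.le _) (sum_nonneg fun i hi ↦ by
            have := hθ i hi; have := ha i hi; have := hA i hi; positivity)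
        · exact sum_mul_rpow_sub_one_mul_le s hq hqp hθ hθ₁ ha hA
    _ = R := by
        rw [← mul_assoc, ← rpow_add hw, show 1 / q - 1 + (q - 1) / q = 0 by field_simp; ring,
          rpow_zero, one_mul, ← rpow_mul hR, one_div_mul_cancel hp.ne', rpow_one]

end WeightedMeans

/-- Scalar model of the hidden convexity inequality: for `1 < q < p`, `t ∈ [0,1]`,
`a,b,A,B ≥ 0` with `(1-t)a^q + t b^q > 0`,
`(((1-t)a^q + t b^q)^(1/q - 1) · ((1-t)a^(q-1)A + t b^(q-1)B))^p ≤ (1-t)A^p + t B^p`. -/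
theorem stmt_3 (p q : ℝ) (hq : 1 < q) (hqp : q < p)
    (t : ℝ) (ht : t ∈ Icc (0:ℝ) 1)
    (a b A B : ℝ) (ha : 0 ≤ a) (hb : 0 ≤ b) (hA : 0 ≤ A) (hB : 0 ≤ B)
    (hpos : 0 < (1 - t) * a ^ q + t * b ^ q) :
    (((1 - t) * a ^ q + t * b ^ q) ^ (1 / q - 1) *
        ((1 - t) * a ^ (q - 1) * A + t * b ^ (q - 1) * B)) ^ p
      ≤ (1 - t) * A ^ p + t * B ^ p := by
  simpa using rpow_mul_sum_mul_rpow_sub_one_mul_rpow_le Finset.univ (θ := ![1 - t, t])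
    (a := ![a, b]) (A := ![A, B]) hq hqp.le (by simp [ht.1, ht.2]) (by simp)
    (by simp [ha, hb]) (by simp [hA, hB]) (by simpa using hpos)
end

section
/- Let 1 < q < p, t ∈ (0,1), and a, b, A, B ≥ 0 with a ≠ b and A + B > 0 and a, b, A, B representing values and gradients with (b, B) ∈ (0,∞)². Then the inequality (((1-t)a^q + t b^q)^((1-q)/q) · ((1-t)a^(q-1) A + t b^(q-1) B))^p < (1-t)A^p + t B^p holds strictly. -/
/-!
Put `S = (1-t) a^q + t b^q`, `M = (1-t) a^(q-1) A + t b^(q-1) B` and write `M_r(x, y)` for the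
weighted power mean `((1-t) x^r + t y^r)^(1/r)`, so that `S^((1-q)/q) = M_q(a, b)^(1-q)`.
Hölder's inequality with the exponents `q/(q-1)` and `q` gives `M ≤ M_q(a, b)^(q-1) M_q(A, B)`,
hence the left-hand side is at most `M_q(A, B)^p ≤ M_p(A, B)^p`, which is the right-hand side.
Strictness: if `A ≠ B` the power-mean inequality `M_q(A, B) < M_p(A, B)` is strict; if `A = B`
then `M = M_{q-1}(a, b)^(q-1) A` and the strict inequality `M_{q-1}(a, b) < M_q(a, b)` for
`a ≠ b` gives `S^((1-q)/q) M < A`.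
-/

open Set Real

noncomputable def powerMean (t r x y : ℝ) : ℝ := ((1 - t) * x ^ r + t * y ^ r) ^ r⁻¹

section powerMean

variable {t r s x y : ℝ}

lemma one_sub_mul_rpow_add_mul_rpow_nonneg (ht : t ∈ Icc (0 : ℝ) 1) (hx : 0 ≤ x) (hy : 0 ≤ y) :
    0 ≤ (1 - t) * x ^ r + t * y ^ r := by
  have := ht.1; have := sub_nonneg.2 ht.2; positivity

lemma powerMean_nonneg (ht : t ∈ Icc (0 : ℝ) 1) (hx : 0 ≤ x) (hy : 0 ≤ y) :
    0 ≤ powerMean t r x y :=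
  rpow_nonneg (one_sub_mul_rpow_add_mul_rpow_nonneg ht hx hy) _

lemma powerMean_rpow (ht : t ∈ Icc (0 : ℝ) 1) (hx : 0 ≤ x) (hy : 0 ≤ y) (hr : r ≠ 0) :
    powerMean t r x y ^ r = (1 - t) * x ^ r + t * y ^ r :=
  rpow_inv_rpow (one_sub_mul_rpow_add_mul_rpow_nonneg ht hx hy) hr

lemma powerMean_self (hx : 0 ≤ x) (hr : r ≠ 0) : powerMean t r x x = x := by
  rw [powerMean, ← add_mul, sub_add_cancel, one_mul, rpow_rpow_inv hx hr]

lemma powerMean_lt_powerMean (hr : 0 < r) (hrs : r < s) (ht : t ∈ Ioo (0 : ℝ) 1)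
    (hx : 0 ≤ x) (hy : 0 ≤ y) (hxy : x ≠ y) : powerMean t r x y < powerMean t s x y := by
  have hs : 0 < s := hr.trans hrs
  have hxy' : x ^ r ≠ y ^ r := fun h => hxy ((rpow_left_inj hx hy hr.ne').1 h)
  have hpow : ∀ {z : ℝ}, 0 ≤ z → (z ^ r) ^ (s / r) = z ^ s := fun hz => by
    rw [← rpow_mul hz, mul_div_cancel₀ _ hr.ne']
  have key : ((1 - t) * x ^ r + t * y ^ r) ^ (s / r) < (1 - t) * x ^ s + t * y ^ s := by
    have := (strictConvexOn_rpow ((one_lt_div hr).2 hrs)).2 (rpow_nonneg hx r)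
      (rpow_nonneg hy r) hxy' (sub_pos.2 ht.2) ht.1 (sub_add_cancel 1 t)
    simpa only [smul_eq_mul, hpow hx, hpow hy] using this
  have hbase := one_sub_mul_rpow_add_mul_rpow_nonneg (r := r) (Ioo_subset_Icc_self ht) hx hy
  calc powerMean t r x y = (((1 - t) * x ^ r + t * y ^ r) ^ (s / r)) ^ s⁻¹ := by
        rw [powerMean, ← rpow_mul hbase, div_mul_eq_mul_div, mul_inv_cancel₀ hs.ne', one_div]
    _ < powerMean t s x y := rpow_lt_rpow (rpow_nonneg hbase _) key (inv_pos.2 hs)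

lemma inner_le_powerMean_mul_powerMean {p q x₁ x₂ y₁ y₂ : ℝ} (hpq : p.HolderConjugate q)
    (ht : t ∈ Icc (0 : ℝ) 1) (hx₁ : 0 ≤ x₁) (hx₂ : 0 ≤ x₂) (hy₁ : 0 ≤ y₁) (hy₂ : 0 ≤ y₂) :
    (1 - t) * x₁ * y₁ + t * x₂ * y₂ ≤ powerMean t p x₁ x₂ * powerMean t q y₁ y₂ := by
  obtain ⟨ht0, ht1⟩ := ht
  have ht0' : 0 ≤ 1 - t := sub_nonneg.2 ht1
  have hsplit : ∀ {w x y : ℝ}, 0 ≤ w → w ^ p⁻¹ * x * (w ^ q⁻¹ * y) = w * x * y := by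
    intro w x y hw
    rw [show w * x * y = (w ^ p⁻¹ * w ^ q⁻¹) * x * y by
      rw [← rpow_add' hw (by rw [hpq.inv_add_inv_eq_one]; exact one_ne_zero),
        hpq.inv_add_inv_eq_one, rpow_one]]
    ring
  have hpow : ∀ {r w x : ℝ}, r ≠ 0 → 0 ≤ w → 0 ≤ x → (w ^ r⁻¹ * x) ^ r = w * x ^ r :=
    fun hr hw hx => by rw [mul_rpow (rpow_nonneg hw _) hx, rpow_inv_rpow hw hr]
  have := inner_le_Lp_mul_Lq_of_nonneg Finset.univ hpq
    (f := ![(1 - t) ^ p⁻¹ * x₁, t ^ p⁻¹ * x₂]) (g := ![(1 - t) ^ q⁻¹ * y₁, t ^ q⁻¹ * y₂])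
    (by intro i _; fin_cases i <;> simp <;> positivity)
    (by intro i _; fin_cases i <;> simp <;> positivity)
  simpa only [Fin.sum_univ_two, Matrix.cons_val_zero, Matrix.cons_val_one, hsplit ht0',
    hsplit ht0, hpow hpq.ne_zero ht0' hx₁, hpow hpq.ne_zero ht0 hx₂,
    hpow hpq.symm.ne_zero ht0' hy₁, hpow hpq.symm.ne_zero ht0 hy₂, one_div, powerMean] using this

lemma powerMean_conjExponent_rpow_sub_one {q : ℝ} (hq : 1 < q) (ht : t ∈ Icc (0 : ℝ) 1)
    (hx : 0 ≤ x) (hy : 0 ≤ y) :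
    powerMean t q.conjExponent (x ^ (q - 1)) (y ^ (q - 1)) = powerMean t q x y ^ (q - 1) := by
  have hq1 : q - 1 ≠ 0 := (sub_pos.2 hq).ne'
  have hpow : ∀ {z : ℝ}, 0 ≤ z → (z ^ (q - 1)) ^ q.conjExponent = z ^ q := fun hz => by
    rw [← rpow_mul hz, Real.conjExponent, mul_div_cancel₀ _ hq1]
  have hbase := one_sub_mul_rpow_add_mul_rpow_nonneg (r := q) ht hx hy
  rw [powerMean, powerMean, hpow hx, hpow hy, ← rpow_mul hbase, Real.conjExponent]
  congr 1
  field_simp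

end powerMean

lemma rpow_sub_one_mul_add_le {q t a b A B : ℝ} (hq : 1 < q) (ht : t ∈ Icc (0 : ℝ) 1)
    (ha : 0 ≤ a) (hb : 0 ≤ b) (hA : 0 ≤ A) (hB : 0 ≤ B) :
    (1 - t) * a ^ (q - 1) * A + t * b ^ (q - 1) * B
      ≤ powerMean t q a b ^ (q - 1) * powerMean t q A B := by
  rw [← powerMean_conjExponent_rpow_sub_one hq ht ha hb]
  exact inner_le_powerMean_mul_powerMean (Real.HolderConjugate.conjExponent hq).symm ht
    (rpow_nonneg ha _) (rpow_nonneg hb _) hA hB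

lemma rpow_one_sub_div_eq_inv_powerMean_rpow {q t a b : ℝ} (hq : q ≠ 0)
    (hS : 0 < (1 - t) * a ^ q + t * b ^ q) :
    ((1 - t) * a ^ q + t * b ^ q) ^ ((1 - q) / q) = (powerMean t q a b ^ (q - 1))⁻¹ := by
  rw [powerMean, ← rpow_mul hS.le, ← rpow_neg hS.le]
  congr 1
  field_simp
  ring

theorem stmt_4_general (p q : ℝ) (hq : 1 < q) (hqp : q < p)
    (t : ℝ) (ht : t ∈ Ioo (0:ℝ) 1)
    (a b A B : ℝ) (ha : 0 ≤ a) (hA : 0 ≤ A) (hb : 0 < b) (hB : 0 < B)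
    (hab : a ≠ b) :
    (((1 - t) * a ^ q + t * b ^ q) ^ ((1 - q) / q) *
        ((1 - t) * a ^ (q - 1) * A + t * b ^ (q - 1) * B)) ^ p
      < (1 - t) * A ^ p + t * B ^ p := by
  have ht' : t ∈ Icc (0 : ℝ) 1 := Ioo_subset_Icc_self ht
  have hq0 : 0 < q := by linarith
  have hq1 : 0 < q - 1 := sub_pos.2 hq
  have hp : 0 < p := hq0.trans hqp
  have hS : 0 < (1 - t) * a ^ q + t * b ^ q := by
    have := ht.1; have := sub_pos.2 ht.2; positivity
  have hG : 0 < powerMean t q a b ^ (q - 1) := rpow_pos_of_pos (rpow_pos_of_pos hS _) _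
  have hM : (1 - t) * a ^ (q - 1) * A + t * b ^ (q - 1) * B
      < powerMean t q a b ^ (q - 1) * powerMean t p A B := by
    rcases eq_or_ne A B with rfl | hAB
    · rw [powerMean_self hA hp.ne']
      calc (1 - t) * a ^ (q - 1) * A + t * b ^ (q - 1) * A
          = powerMean t (q - 1) a b ^ (q - 1) * A := by
            rw [powerMean_rpow ht' ha hb.le hq1.ne']; ring
        _ < powerMean t q a b ^ (q - 1) * A :=
            mul_lt_mul_of_pos_right (rpow_lt_rpow (powerMean_nonneg ht' ha hb.le)
              (powerMean_lt_powerMean hq1 (sub_one_lt q) ht ha hb.le hab) hq1) hB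
    · calc (1 - t) * a ^ (q - 1) * A + t * b ^ (q - 1) * B
          ≤ powerMean t q a b ^ (q - 1) * powerMean t q A B :=
            rpow_sub_one_mul_add_le hq ht' ha hb.le hA hB.le
        _ < powerMean t q a b ^ (q - 1) * powerMean t p A B :=
            mul_lt_mul_of_pos_left (powerMean_lt_powerMean hq0 hqp ht hA hB.le hAB) hG
  rw [rpow_one_sub_div_eq_inv_powerMean_rpow hq0.ne' hS, ← powerMean_rpow ht' hA hB.le hp.ne']
  have hM0 : 0 ≤ (1 - t) * a ^ (q - 1) * A + t * b ^ (q - 1) * B := by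
    have := ht.1; have := sub_pos.2 ht.2; positivity
  exact rpow_lt_rpow (mul_nonneg (inv_nonneg.2 hG.le) hM0) ((inv_mul_lt_iff₀ hG).2 hM) hp

/-- Strict scalar hidden convexity: for `1 < q < p`, `t ∈ (0,1)`, `a,A ≥ 0`,
`(b,B) ∈ (0,∞)²`, `a ≠ b` and `A + B > 0`, the inequality
`(((1-t)a^q + t b^q)^((1-q)/q) · ((1-t)a^(q-1)A + t b^(q-1)B))^p < (1-t)A^p + t B^p`
holds strictly. -/
theorem stmt_4 (p q : ℝ) (hq : 1 < q) (hqp : q < p)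
    (t : ℝ) (ht : t ∈ Ioo (0:ℝ) 1)
    (a b A B : ℝ) (ha : 0 ≤ a) (hA : 0 ≤ A) (hb : 0 < b) (hB : 0 < B)
    (hab : a ≠ b) (hAB : 0 < A + B) :
    (((1 - t) * a ^ q + t * b ^ q) ^ ((1 - q) / q) *
        ((1 - t) * a ^ (q - 1) * A + t * b ^ (q - 1) * B)) ^ p
      < (1 - t) * A ^ p + t * B ^ p :=
  stmt_4_general p q hq hqp t ht a b A B ha hA hb hB hab
end

section
/- Let 1 < q < p and let g : (0,∞) → ℝ be such that t ↦ g(t)/t^(q-1) is nonincreasing on (0,∞). Define G(t) = ∫₀ᵗ g(s) ds for t ≥ 0. Then the map s ↦ G(s^(1/q)) is concave on [0,∞). -/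
open Set intervalIntegral MeasureTheory

/-!
Writing `h t = g t / t ^ (q - 1)`, the chain rule gives
`d/ds G (s ^ (1 / q)) = q⁻¹ * h (s ^ (1 / q))` for `s > 0`, which is antitone since `h` is
antitone and `s ↦ s ^ (1 / q)` is monotone; so the map is concave. If `g` fails to be
integrable near `0`, then every `∫₀ᵗ g` takes the junk value `0` and the map is constant.
-/

section Primitive

variable {E : Type*} [NormedAddCommGroup E] {g : ℝ → E} {a : ℝ}

theorem IntervalIntegrable.of_continuousOn_Ioi {μ : Measure ℝ} [IsLocallyFiniteMeasure μ]
    {s t : ℝ} (hgc : ContinuousOn g (Ioi a)) (hs : a < s) (ht : a < t)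
    (hint : IntervalIntegrable g μ a s) : IntervalIntegrable g μ a t :=
  hint.trans <| (hgc.mono fun _ hx => (lt_min hs ht).trans_le hx.1).intervalIntegrable

theorem integral_eq_zero_of_not_intervalIntegrable_of_continuousOn_Ioi [NormedSpace ℝ E]
    {t₀ : ℝ} (hgc : ContinuousOn g (Ioi a)) (ht₀ : a < t₀)
    (hnint : ¬IntervalIntegrable g volume a t₀)
    {t : ℝ} (ht : a ≤ t) : ∫ x in a..t, g x = 0 := by
  rcases ht.eq_or_lt with rfl | ht
  · exact integral_same
  · exact integral_undef fun hint => hnint (hint.of_continuousOn_Ioi hgc ht ht₀)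

theorem continuousOn_primitive_Ici [NormedSpace ℝ E]
    (hint : ∀ t > a, IntervalIntegrable g volume a t) :
    ContinuousOn (fun t => ∫ x in a..t, g x) (Ici a) := by
  intro t (ht : a ≤ t)
  have hint' : IntervalIntegrable g volume (min a a) (max a (t + 1)) := by
    rw [min_self, max_eq_right (by linarith)]
    exact hint _ (by linarith)
  refine (continuousWithinAt_primitive (measure_singleton t) hint').mono_of_mem_nhdsWithin ?_
  rw [← Ici_inter_Iic]
  exact inter_mem_nhdsWithin _ (Iic_mem_nhds (by linarith))

end Primitive

section RpowComposition

variable {g : ℝ → ℝ} {q : ℝ}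

theorem hasDerivAt_primitive_comp_rpow_one_div (hq : q ≠ 0) {s : ℝ} (hs : 0 < s)
    (hint : IntervalIntegrable g volume 0 (s ^ (1 / q))) (hgc : ContinuousOn g (Ioi 0)) :
    HasDerivAt (fun s => ∫ x in 0..s ^ (1 / q), g x)
      (q⁻¹ * (g (s ^ (1 / q)) / (s ^ (1 / q)) ^ (q - 1))) s := by
  have ht : 0 < s ^ (1 / q) := Real.rpow_pos_of_pos hs _
  have hprim : HasDerivAt (fun u => ∫ x in 0..u, g x) (g (s ^ (1 / q))) (s ^ (1 / q)) :=
    integral_hasDerivAt_right hint (hgc.stronglyMeasurableAtFilter isOpen_Ioi _ ht)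
      (hgc.continuousAt (Ioi_mem_nhds ht))
  refine (hprim.comp s (Real.hasDerivAt_rpow_const (Or.inl hs.ne'))).congr_deriv ?_
  have hpow : s ^ (1 / q - 1) = ((s ^ (1 / q)) ^ (q - 1))⁻¹ := by
    rw [← Real.rpow_mul hs.le, ← Real.rpow_neg hs.le]
    congr 1
    field_simp
    ring
  rw [hpow]
  ring

theorem concaveOn_primitive_comp_rpow_one_div (hq : 0 < q) (hgc : ContinuousOn g (Ioi 0))
    (hmono : AntitoneOn (fun t => g t / t ^ (q - 1)) (Ioi 0))
    (hint : ∀ t > 0, IntervalIntegrable g volume 0 t) :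
    ConcaveOn ℝ (Ici 0) (fun s => ∫ x in 0..s ^ (1 / q), g x) := by
  have hderiv : ∀ s ∈ Ioi (0 : ℝ), HasDerivAt (fun s => ∫ x in 0..s ^ (1 / q), g x)
      (q⁻¹ * (g (s ^ (1 / q)) / (s ^ (1 / q)) ^ (q - 1))) s := fun s hs =>
    hasDerivAt_primitive_comp_rpow_one_div hq.ne' hs (hint _ (Real.rpow_pos_of_pos hs _)) hgc
  have hcont : ContinuousOn (fun s : ℝ => ∫ x in 0..s ^ (1 / q), g x) (Ici 0) :=
    (continuousOn_primitive_Ici hint).comp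
      (Real.continuous_rpow_const (by positivity)).continuousOn
      fun s (hs : 0 ≤ s) => Real.rpow_nonneg hs _
  refine AntitoneOn.concaveOn_of_deriv (convex_Ici 0) hcont ?_ ?_ <;> rw [interior_Ici]
  · exact fun s hs => (hderiv s hs).differentiableAt.differentiableWithinAt
  · intro x hx y hy hxy
    rw [(hderiv x hx).deriv, (hderiv y hy).deriv]
    gcongr q⁻¹ * ?_
    exact hmono (Real.rpow_pos_of_pos hx _) (Real.rpow_pos_of_pos hy _)
      (Real.rpow_le_rpow (le_of_lt hx) hxy (by positivity))

end RpowComposition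

theorem stmt_5_general (q : ℝ) (hq : 1 < q)
    (g : ℝ → ℝ) (hgc : ContinuousOn g (Ioi 0))
    (hmono : AntitoneOn (fun t => g t / t ^ (q - 1)) (Ioi 0))
    (G : ℝ → ℝ) (hG : ∀ t ≥ (0:ℝ), G t = ∫ s in (0:ℝ)..t, g s) :
    ConcaveOn ℝ (Ici (0:ℝ)) (fun s => G (s ^ (1 / q))) := by
  suffices ConcaveOn ℝ (Ici 0) (fun s => ∫ x in 0..s ^ (1 / q), g x) from
    this.congr fun s (hs : 0 ≤ s) => (hG _ (Real.rpow_nonneg hs _)).symm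
  by_cases hint : ∀ t > 0, IntervalIntegrable g volume 0 t
  · exact concaveOn_primitive_comp_rpow_one_div (by linarith) hgc hmono hint
  · push Not at hint
    obtain ⟨t₀, ht₀, hnint⟩ := hint
    refine (concaveOn_const 0 (convex_Ici 0)).congr fun s (hs : 0 ≤ s) => ?_
    exact (integral_eq_zero_of_not_intervalIntegrable_of_continuousOn_Ioi hgc ht₀ hnint
      (Real.rpow_nonneg hs _)).symm

/-- If `1 < q < p` and `g : (0,∞) → ℝ` is continuous with `t ↦ g(t)/t^(q-1)`
nonincreasing on `(0,∞)`, and `G(t) = ∫₀ᵗ g`, then `s ↦ G(s^(1/q))` is concave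
on `[0,∞)`. -/
theorem stmt_5 (p q : ℝ) (hq : 1 < q) (hqp : q < p)
    (g : ℝ → ℝ) (hgc : ContinuousOn g (Ioi 0))
    (hmono : AntitoneOn (fun t => g t / t ^ (q - 1)) (Ioi 0))
    (G : ℝ → ℝ) (hG : ∀ t ≥ (0:ℝ), G t = ∫ s in (0:ℝ)..t, g s) :
    ConcaveOn ℝ (Ici (0:ℝ)) (fun s => G (s ^ (1 / q))) :=
  stmt_5_general q hq g hgc hmono G hG
end

section
/- Let H : [0,∞) → ℝ be nondecreasing, convex, and strictly increasing on (0,∞). Let m : [0,1] × Ω → [0,∞) be pointwise convex in t, and suppose for some t ≠ s and α ∈ (0,1) equality holds: ∫ H(m((1-α)t+αs, x)) dμ = (1-α)∫H(m(t,x))dμ + α∫H(m(s,x))dμ. Then m((1-α)t+αs, x) = (1-α)m(t,x) + αm(s,x) and H is affine on the segment [min(m(t,x), m(s,x)), max(m(t,x),m(s,x))] for μ-a.e. x; in particular if additionally the pointwise inequality m((1-α)t+αs,x) < (1-α)m(t,x)+αm(s,x) holds on a set of positive measure where m(t,x)+m(s,x) > 0, a contradiction results. -/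
/-!
Pointwise, monotonicity and convexity of `H` give
`H(m(u,x)) ≤ H((1-α)m(t,x) + αm(s,x)) ≤ (1-α)H(m(t,x)) + αH(m(s,x))`, so equality of the
integrals forces equality in both steps almost everywhere. Strict monotonicity turns the first
into equality of the arguments. For the second, the chord gap
`β ↦ (1-β)H(a) + βH(b) - H((1-β)a + βb)` is concave and nonnegative on `[0,1]`, so vanishing at
the interior point `α` forces it to vanish identically.
-/

open Set MeasureTheory

theorem MonotoneOn.strictMonoOn_Ici_of_strictMonoOn_Ioi {α β : Type*} [LinearOrder α]
    [DenselyOrdered α] [Preorder β] {f : α → β} {a : α} (hmono : MonotoneOn f (Ici a))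
    (hstrict : StrictMonoOn f (Ioi a)) : StrictMonoOn f (Ici a) := by
  intro x hx y hy hxy
  rcases (mem_Ici.mp hx).eq_or_lt with rfl | hax
  · obtain ⟨z, hxz, hzy⟩ := exists_between hxy
    exact (hmono hx hxz.le hxz.le).trans_lt (hstrict hxz (hxz.trans hzy) hzy)
  · exact hstrict hax (hax.trans hxy) hxy

theorem ConcaveOn.eq_zero_of_mem_openSegment {E : Type*} [AddCommGroup E] [Module ℝ E]
    {s : Set E} {φ : E → ℝ} {x y z : E} (hφ : ConcaveOn ℝ s φ) (hx : x ∈ s) (hy : y ∈ s)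
    (hx0 : 0 ≤ φ x) (hy0 : 0 ≤ φ y) (hz : z ∈ openSegment ℝ x y) (hz0 : φ z ≤ 0) :
    φ x = 0 := by
  obtain ⟨p, q, hp, hq, hpq, rfl⟩ := hz
  have hconc := hφ.2 hx hy hp.le hq.le hpq
  simp only [smul_eq_mul] at hconc
  nlinarith [mul_nonneg hq.le hy0]

theorem ConcaveOn.eqOn_zero_of_nonneg_of_eq_zero {φ : ℝ → ℝ} {a b z : ℝ}
    (hφ : ConcaveOn ℝ (Icc a b) φ) (hnn : ∀ x ∈ Icc a b, 0 ≤ φ x) (hz : z ∈ Ioo a b)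
    (hφz : φ z = 0) : EqOn φ 0 (Icc a b) := by
  intro x hx
  have ha : a ∈ Icc a b := left_mem_Icc.mpr (hz.1.trans hz.2).le
  have hb : b ∈ Icc a b := right_mem_Icc.mpr (hz.1.trans hz.2).le
  rcases lt_trichotomy x z with hxz | rfl | hzx
  · refine hφ.eq_zero_of_mem_openSegment hx hb (hnn x hx) (hnn b hb) ?_ hφz.le
    rw [openSegment_eq_Ioo (hxz.trans hz.2)]
    exact ⟨hxz, hz.2⟩
  · exact hφz
  · refine hφ.eq_zero_of_mem_openSegment hx ha (hnn x hx) (hnn a ha) ?_ hφz.le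
    rw [openSegment_symm, openSegment_eq_Ioo (hz.1.trans hzx)]
    exact ⟨hz.1, hzx⟩

open AffineMap in
theorem ConvexOn.map_lineMap_eq_of_mem_Ioo {E : Type*} [AddCommGroup E] [Module ℝ E]
    {s : Set E} {f : E → ℝ} {a b : E} {α : ℝ} (hf : ConvexOn ℝ s f) (ha : a ∈ s) (hb : b ∈ s)
    (hα : α ∈ Ioo 0 1) (heq : f (lineMap a b α) = lineMap (f a) (f b) α) :
    ∀ β ∈ Icc (0 : ℝ) 1, f (lineMap a b β) = lineMap (f a) (f b) β := by
  have hchord : ConcaveOn ℝ (Icc 0 1) fun β : ℝ => lineMap (f a) (f b) β :=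
    ((concaveOn_id convex_univ).comp_affineMap _).subset (subset_univ _) (convex_Icc 0 1)
  have hgraph : ConvexOn ℝ (Icc 0 1) fun β : ℝ => f (lineMap a b β) :=
    (hf.comp_affineMap _).subset (hf.1.mapsTo_lineMap ha hb) (convex_Icc 0 1)
  have hgap := (hchord.sub hgraph).eqOn_zero_of_nonneg_of_eq_zero (fun β hβ => ?_) hα
    (sub_eq_zero.mpr heq.symm)
  · exact fun β hβ => (sub_eq_zero.mp (hgap hβ)).symm
  · have hjensen := hf.2 ha hb (sub_nonneg.mpr hβ.2) hβ.1 (sub_add_cancel 1 β)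
    simpa [lineMap_apply_module] using hjensen

section ConvexCombination

variable {s : Set ℝ} {H : ℝ → ℝ} {v a b α : ℝ}

theorem ConvexOn.map_le_of_le_of_monotoneOn (hconv : ConvexOn ℝ s H) (hmono : MonotoneOn H s)
    (hv : v ∈ s) (ha : a ∈ s) (hb : b ∈ s) (hα : α ∈ Icc 0 1)
    (hle : v ≤ (1 - α) * a + α * b) : H v ≤ (1 - α) * H a + α * H b := by
  have hc : (1 - α) * a + α * b ∈ s := hconv.1 ha hb (sub_nonneg.mpr hα.2) hα.1 (by ring)
  exact (hmono hv hc hle).trans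
    (hconv.2 ha hb (sub_nonneg.mpr hα.2) hα.1 (by ring))

theorem ConvexOn.eq_and_affine_of_le_map_of_strictMonoOn (hconv : ConvexOn ℝ s H)
    (hmono : StrictMonoOn H s) (hv : v ∈ s) (ha : a ∈ s) (hb : b ∈ s) (hα : α ∈ Ioo 0 1)
    (hle : v ≤ (1 - α) * a + α * b) (hge : (1 - α) * H a + α * H b ≤ H v) :
    v = (1 - α) * a + α * b ∧
      ∀ β ∈ Icc (0 : ℝ) 1, H ((1 - β) * a + β * b) = (1 - β) * H a + β * H b := by
  have hc : (1 - α) * a + α * b ∈ s := hconv.1 ha hb (sub_pos.mpr hα.2).le hα.1.le (by ring)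
  have hHc : H ((1 - α) * a + α * b) ≤ (1 - α) * H a + α * H b :=
    hconv.2 ha hb (sub_pos.mpr hα.2).le hα.1.le (by ring)
  have hHv : H v ≤ H ((1 - α) * a + α * b) := hmono.monotoneOn hv hc hle
  refine ⟨hmono.injOn hv hc (by linarith), fun β hβ => ?_⟩
  have hchord := hconv.map_lineMap_eq_of_mem_Ioo ha hb hα
    (by simp only [AffineMap.lineMap_apply_module, smul_eq_mul]; linarith)
  simpa only [AffineMap.lineMap_apply_module, smul_eq_mul] using hchord β hβ

end ConvexCombination

theorem stmt_11_general {Ω : Type*} [MeasurableSpace Ω] (μ : Measure Ω)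
    (H : ℝ → ℝ) (hHmono : MonotoneOn H (Ici 0)) (hHconv : ConvexOn ℝ (Ici 0) H)
    (hHstrict : StrictMonoOn H (Ioi 0))
    (m : ℝ → Ω → ℝ)
    (hmnn : ∀ t x, 0 ≤ m t x)
    (hmconv : ∀ x, ∀ t s : ℝ, ∀ α ∈ Icc (0:ℝ) 1,
      m ((1 - α) * t + α * s) x ≤ (1 - α) * m t x + α * m s x)
    (hint : ∀ t : ℝ, Integrable (fun x => H (m t x)) μ)
    (t s : ℝ) (α : ℝ) (hα : α ∈ Ioo (0:ℝ) 1)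
    (heq : ∫ x, H (m ((1 - α) * t + α * s) x) ∂μ
      = (1 - α) * ∫ x, H (m t x) ∂μ + α * ∫ x, H (m s x) ∂μ) :
    (∀ᵐ x ∂μ, m ((1 - α) * t + α * s) x = (1 - α) * m t x + α * m s x ∧
      ∀ β ∈ Icc (0:ℝ) 1,
        H ((1 - β) * m t x + β * m s x) = (1 - β) * H (m t x) + β * H (m s x)) ∧
    (0 < μ {x | m ((1 - α) * t + α * s) x < (1 - α) * m t x + α * m s x ∧
        0 < m t x + m s x} → False) := by
  set u := (1 - α) * t + α * s
  have hstrict := hHmono.strictMonoOn_Ici_of_strictMonoOn_Ioi hHstrict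
  have hint_combo : Integrable (fun x => (1 - α) * H (m t x) + α * H (m s x)) μ :=
    ((hint t).const_mul _).add ((hint s).const_mul _)
  have hjensen : ∀ x, H (m u x) ≤ (1 - α) * H (m t x) + α * H (m s x) := fun x =>
    hHconv.map_le_of_le_of_monotoneOn hHmono (hmnn u x) (hmnn t x) (hmnn s x)
      (Ioo_subset_Icc_self hα) (hmconv x t s α (Ioo_subset_Icc_self hα))
  have hae : (fun x => H (m u x)) =ᵐ[μ] fun x => (1 - α) * H (m t x) + α * H (m s x) := by
    refine (integral_eq_iff_of_ae_le (hint u) hint_combo (ae_of_all _ hjensen)).mp ?_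
    rw [integral_add ((hint t).const_mul _) ((hint s).const_mul _), integral_const_mul,
      integral_const_mul, heq]
  have hmain := hae.mono fun x hx =>
    hHconv.eq_and_affine_of_le_map_of_strictMonoOn hstrict (hmnn u x) (hmnn t x) (hmnn s x) hα
      (hmconv x t s α (Ioo_subset_Icc_self hα)) hx.ge
  refine ⟨hmain, fun hpos => hpos.ne' ?_⟩
  refine measure_mono_null ?_ (ae_iff.mp hmain)
  exact fun x hlt hx => hlt.1.ne hx.1

/-- Equality case in the convexity-under-integral lemma: if `H` is nondecreasing,
convex and strictly increasing on `(0,∞)`, `m` is pointwise convex in `t`, and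
for some `t ≠ s`, `α ∈ (0,1)` the integrals satisfy
`∫ H(m((1-α)t+αs,·)) = (1-α)∫H(m(t,·)) + α∫H(m(s,·))`, then a.e.
`m((1-α)t+αs,x) = (1-α)m(t,x)+αm(s,x)` and `H` is affine on the segment between
`m(t,x)` and `m(s,x)`; in particular, if the strict pointwise inequality holds on
a set of positive measure where `m(t,x)+m(s,x) > 0`, a contradiction results. -/
theorem stmt_11 {Ω : Type*} [MeasurableSpace Ω] (μ : Measure Ω) [IsFiniteMeasure μ]
    (H : ℝ → ℝ) (hHmono : MonotoneOn H (Ici 0)) (hHconv : ConvexOn ℝ (Ici 0) H)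
    (hHstrict : StrictMonoOn H (Ioi 0))
    (m : ℝ → Ω → ℝ)
    (hmnn : ∀ t x, 0 ≤ m t x)
    (hmconv : ∀ x, ∀ t s : ℝ, ∀ α ∈ Icc (0:ℝ) 1,
      m ((1 - α) * t + α * s) x ≤ (1 - α) * m t x + α * m s x)
    (hmeas : ∀ t : ℝ, Measurable (m t))
    (hint : ∀ t : ℝ, Integrable (fun x => H (m t x)) μ)
    (t s : ℝ) (hts : t ≠ s) (α : ℝ) (hα : α ∈ Ioo (0:ℝ) 1)
    (heq : ∫ x, H (m ((1 - α) * t + α * s) x) ∂μ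
      = (1 - α) * ∫ x, H (m t x) ∂μ + α * ∫ x, H (m s x) ∂μ) :
    (∀ᵐ x ∂μ, m ((1 - α) * t + α * s) x = (1 - α) * m t x + α * m s x ∧
      ∀ β ∈ Icc (0:ℝ) 1,
        H ((1 - β) * m t x + β * m s x) = (1 - β) * H (m t x) + β * H (m s x)) ∧
    (0 < μ {x | m ((1 - α) * t + α * s) x < (1 - α) * m t x + α * m s x ∧
        0 < m t x + m s x} → False) :=
  stmt_11_general μ H hHmono hHconv hHstrict m hmnn hmconv hint t s α hα heq
end
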